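/- arXiv:1311.1762 — 7 statements merged into one kernel-verified Lean document; each statement's English description precedes it below -/
import Mathlib

section
/- Let S be a string of length n over a nonempty finite alphabet Σ. Then the set of branching-σ-words of S is finite, and |Σ| multiplied by the number of branching-σ-words of S is at most n (i.e., the number of branching-σ-words is at most n/|Σ|). -/
/-- `occ S w`: the number of indices `i` with `0 ≤ i < |S|` such that `w` is a prefix
of the suffix of `S` starting at position `i`. -/
def occ {α : Type*} [DecidableEq α] (S w : List α) : ℕ :=
  ((Finset.range S.length).filter (fun i => w <+: S.drop i)).card

/-- `w` is a σ-word of `S` if `occ S w ≥ |Σ|`. -/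
def SigmaWord {α : Type*} [DecidableEq α] [Fintype α] (S w : List α) : Prop :=
  Fintype.card α ≤ occ S w

/-- `w` is a branching-σ-word of `S` if two distinct one-character extensions of `w`
are σ-words of `S`. -/
def BranchingSigmaWord {α : Type*} [DecidableEq α] [Fintype α] (S w : List α) : Prop :=
  ∃ a b : α, a ≠ b ∧ SigmaWord S (w ++ [a]) ∧ SigmaWord S (w ++ [b])

/-! The σ-words of `S` are closed under taking prefixes, so they form a finite trie. Its leaves
(the maximal σ-words) are pairwise prefix-incomparable, so their occurrence sets are disjoint sets
of positions of `S`, each of size at least `|Σ|`: there are at most `n / |Σ|` leaves. A trie has no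
more branching nodes than leaves: after ordering `Σ` linearly, send a branching node `w` with
children `w ++ [a]`, `w ++ [b]`, `a < b`, to the lexicographically least leaf above `w ++ [b]`. -/

open Set

section PrefixTree

variable {α : Type*} (P : List α → Prop)

def IsLeaf (m : List α) : Prop := P m ∧ ∀ a, ¬ P (m ++ [a])

def IsBranching (w : List α) : Prop := ∃ a b, a ≠ b ∧ P (w ++ [a]) ∧ P (w ++ [b])

variable {P}

theorem exists_isLeaf_of_isPrefix (hfin : {u | P u}.Finite) {u : List α} (hu : P u) :
    ∃ m, IsLeaf P m ∧ u <+: m := by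
  obtain ⟨m, ⟨hm, hum⟩, hlong⟩ := exists_max_image {m | P m ∧ u <+: m} List.length
    (hfin.subset fun _ h => h.1) ⟨u, hu, List.prefix_rfl⟩
  refine ⟨m, ⟨hm, fun a ha => ?_⟩, hum⟩
  have := hlong (m ++ [a]) ⟨ha, hum.trans (List.prefix_append _ _)⟩
  simp at this

theorem IsLeaf.eq_of_isPrefix (hP : ∀ ⦃u v⦄, u <+: v → P v → P u) {m₁ m₂ : List α}
    (h₁ : IsLeaf P m₁) (h₂ : P m₂) (h : m₁ <+: m₂) : m₁ = m₂ := by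
  obtain ⟨_ | ⟨c, t⟩, rfl⟩ := h
  · simp
  · exact absurd (hP ⟨t, by simp⟩ h₂) (h₁.2 c)

theorem isAntichain_setOf_isLeaf (hP : ∀ ⦃u v⦄, u <+: v → P v → P u) :
    IsAntichain (· <+: ·) {m | IsLeaf P m} :=
  fun _ h₁ _ h₂ hne h => hne (IsLeaf.eq_of_isPrefix hP h₁ h₂.1 h)

theorem finite_setOf_isLeaf (hfin : {u | P u}.Finite) : {m | IsLeaf P m}.Finite :=
  hfin.subset fun _ h => h.1

theorem exists_min_isLeaf_of_isPrefix [LinearOrder α] (hfin : {u | P u}.Finite) {u : List α}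
    (hu : P u) : ∃ m, IsLeaf P m ∧ u <+: m ∧ ∀ m', IsLeaf P m' → u <+: m' → m ≤ m' := by
  obtain ⟨m, ⟨hm, hum⟩, hmin⟩ := exists_min_image {m | IsLeaf P m ∧ u <+: m} id
    ((finite_setOf_isLeaf hfin).subset fun _ h => h.1) (exists_isLeaf_of_isPrefix hfin hu)
  exact ⟨m, hm, hum, fun m' hm' hum' => hmin m' ⟨hm', hum'⟩⟩

theorem IsBranching.exists_lt [LinearOrder α] {w : List α} (h : IsBranching P w) :
    ∃ a b, a < b ∧ P (w ++ [a]) ∧ P (w ++ [b]) := by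
  obtain ⟨a, b, hne, ha, hb⟩ := h
  rcases hne.lt_or_gt with hab | hba
  exacts [⟨a, b, hab, ha, hb⟩, ⟨b, a, hba, hb, ha⟩]

theorem List.append_cons_lt_append_cons [LinearOrder α] (p : List α) {a b : α} (hab : a < b)
    (s t : List α) : p ++ a :: s < p ++ b :: t :=
  List.Lex.append_left _ (List.Lex.rel hab) p

theorem exists_injOn_isBranching_isLeaf [LinearOrder α] (hfin : {u | P u}.Finite) :
    ∃ f : List α → List α, MapsTo f {w | IsBranching P w} {m | IsLeaf P m} ∧
      InjOn f {w | IsBranching P w} := by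
  have key : ∀ w, IsBranching P w → ∃ m, IsLeaf P m ∧ ∃ a b, a < b ∧ P (w ++ [a]) ∧
      w ++ [b] <+: m ∧ ∀ m', IsLeaf P m' → w ++ [b] <+: m' → m ≤ m' := by
    intro w hw
    obtain ⟨a, b, hab, ha, hb⟩ := hw.exists_lt
    obtain ⟨m, hm, hbm, hmin⟩ := exists_min_isLeaf_of_isPrefix hfin hb
    exact ⟨m, hm, a, b, hab, ha, hbm, hmin⟩
  choose! f hleaf hf using key
  have not_length_lt : ∀ w₁ w₂, IsBranching P w₁ → IsBranching P w₂ → f w₁ = f w₂ →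
      ¬ w₁.length < w₂.length := by
    intro w₁ w₂ h₁ h₂ heq hlt
    -- `w₂` lies on the path to `f w₁`, but any leaf above `w₂ ++ [a₂]` is lexicographically less.
    obtain ⟨-, b₁, -, -, hpre₁, hmin₁⟩ := hf w₁ h₁
    obtain ⟨a₂, b₂, hab₂, ha₂, ⟨t, ht⟩, -⟩ := hf w₂ h₂
    obtain ⟨m', hm', t', ht'⟩ := exists_isLeaf_of_isPrefix hfin ha₂
    subst ht'
    have hw₂ : w₁ ++ [b₁] <+: w₂ :=
      List.prefix_of_prefix_length_le hpre₁ (heq ▸ ht ▸ (List.prefix_append _ _).trans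
        (List.prefix_append _ _)) (by simpa using hlt)
    have := hmin₁ _ hm' (hw₂.trans ((List.prefix_append _ _).trans (List.prefix_append _ _)))
    refine (List.append_cons_lt_append_cons w₂ hab₂ t' t).not_ge ?_
    simpa [← ht, heq] using this
  refine ⟨f, hleaf, fun w₁ h₁ w₂ h₂ heq => ?_⟩
  obtain hlt | hlen | hgt := lt_trichotomy w₁.length w₂.length
  · exact absurd hlt (not_length_lt w₁ w₂ h₁ h₂ heq)
  · obtain ⟨-, b₁, -, -, hpre₁, -⟩ := hf w₁ h₁
    obtain ⟨-, b₂, -, -, hpre₂, -⟩ := hf w₂ h₂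
    have hlen' : (w₁ ++ [b₁]).length = (w₂ ++ [b₂]).length := by simp [hlen]
    have := (List.prefix_of_prefix_length_le hpre₁ (heq ▸ hpre₂) hlen'.le).eq_of_length hlen'
    exact (List.append_inj' this rfl).1
  · exact absurd hgt (not_length_lt w₂ w₁ h₂ h₁ heq.symm)

end PrefixTree

section Occurrences

variable {α : Type*} [DecidableEq α]

theorem occ_le_occ_of_isPrefix (S : List α) {w v : List α} (h : w <+: v) : occ S v ≤ occ S w :=
  Finset.card_le_card fun _ hi => by
    simp only [Finset.mem_filter] at hi ⊢
    exact ⟨hi.1, h.trans hi.2⟩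

theorem sum_occ_le_length (S : List α) (M : Finset (List α))
    (hM : IsAntichain (· <+: ·) (M : Set (List α))) : ∑ m ∈ M, occ S m ≤ S.length := by
  have hdisj : (M : Set (List α)).PairwiseDisjoint
      fun m => (Finset.range S.length).filter (fun i => m <+: S.drop i) := by
    intro m₁ h₁ m₂ h₂ hne
    refine Finset.disjoint_left.mpr fun i hi₁ hi₂ => ?_
    simp only [Finset.mem_filter] at hi₁ hi₂
    rcases List.prefix_or_prefix_of_prefix hi₁.2 hi₂.2 with h | h
    exacts [hM h₁ h₂ hne h, hM h₂ h₁ hne.symm h]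
  calc ∑ m ∈ M, occ S m = (M.biUnion _).card := (Finset.card_biUnion hdisj).symm
    _ ≤ (Finset.range S.length).card :=
      Finset.card_le_card (Finset.biUnion_subset.mpr fun _ _ => Finset.filter_subset _ _)
    _ = S.length := Finset.card_range _

variable [Fintype α]

theorem sigmaWord_of_isPrefix {S : List α} ⦃w v : List α⦄ (h : w <+: v) (hv : SigmaWord S v) :
    SigmaWord S w :=
  hv.trans (occ_le_occ_of_isPrefix S h)

theorem SigmaWord.sublist [Nonempty α] {S w : List α} (h : SigmaWord S w) : w.Sublist S := by
  obtain ⟨i, hi⟩ := Finset.card_pos.mp (Fintype.card_pos.trans_le h)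
  exact (Finset.mem_filter.mp hi).2.sublist.trans (List.drop_sublist _ _)

theorem finite_setOf_sigmaWord [Nonempty α] (S : List α) : {w | SigmaWord S w}.Finite :=
  S.sublists.toFinset.finite_toSet.subset fun _ h => by simpa using h.sublist

theorem card_mul_ncard_isLeaf_sigmaWord_le [Nonempty α] (S : List α) :
    Fintype.card α * {m | IsLeaf (SigmaWord S) m}.ncard ≤ S.length := by
  have hfin := finite_setOf_isLeaf (finite_setOf_sigmaWord S)
  have hanti : IsAntichain (· <+: ·) {m | IsLeaf (SigmaWord S) m} :=
    isAntichain_setOf_isLeaf sigmaWord_of_isPrefix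
  rw [Set.ncard_eq_toFinset_card _ hfin]
  calc Fintype.card α * hfin.toFinset.card = ∑ _m ∈ hfin.toFinset, Fintype.card α := by
        rw [Finset.sum_const, smul_eq_mul, mul_comm]
    _ ≤ ∑ m ∈ hfin.toFinset, occ S m :=
        Finset.sum_le_sum fun m hm => ((hfin.mem_toFinset).mp hm).1
    _ ≤ S.length := sum_occ_le_length S _ (by simpa using hanti)

end Occurrences

theorem stmt_0 {α : Type*} [DecidableEq α] [Fintype α] [Nonempty α] (S : List α) :
    {w : List α | BranchingSigmaWord S w}.Finite ∧
    Fintype.card α * {w : List α | BranchingSigmaWord S w}.ncard ≤ S.length := by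
  obtain ⟨f, hmaps, hinj⟩ : ∃ f : List α → List α,
      MapsTo f {w | BranchingSigmaWord S w} {m | IsLeaf (SigmaWord S) m} ∧
      InjOn f {w | BranchingSigmaWord S w} := by
    let _ : LinearOrder α := LinearOrder.lift' _ (Fintype.equivFin α).injective
    exact exists_injOn_isBranching_isLeaf (finite_setOf_sigmaWord S)
  have hleaves := finite_setOf_isLeaf (finite_setOf_sigmaWord S)
  refine ⟨hleaves.of_injOn hmaps hinj, ?_⟩
  calc Fintype.card α * {w | BranchingSigmaWord S w}.ncard
      ≤ Fintype.card α * {m | IsLeaf (SigmaWord S) m}.ncard :=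
        Nat.mul_le_mul_left _ (ncard_le_ncard_of_injOn f hmaps hinj hleaves)
    _ ≤ S.length := card_mul_ncard_isLeaf_sigmaWord_le S
end

section
/- Let S be a string of length n over a nonempty finite alphabet Σ. Then |Σ| multiplied by the number of σ-leaf-words of S is at most n (i.e., the number of σ-leaf-words is at most n/|Σ|). -/
/-- `w` is a σ-leaf-word of `S` if it is a σ-word of `S` but no one-character
extension of `w` is a σ-word of `S`. -/
def SigmaLeafWord {α : Type*} [DecidableEq α] [Fintype α] (S w : List α) : Prop :=
  SigmaWord S w ∧ ∀ a : α, ¬ SigmaWord S (w ++ [a])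

theorem stmt_1 {α : Type*} [DecidableEq α] [Fintype α] [Nonempty α] (S : List α) :
    {w : List α | SigmaLeafWord S w}.Finite ∧
    Fintype.card α * {w : List α | SigmaLeafWord S w}.ncard ≤ S.length := by
  classical
  set P : List α → Finset ℕ :=
    fun w => (Finset.range S.length).filter (fun i => w <+: S.drop i) with hP
  have hocc : ∀ w, occ S w = (P w).card := fun w => rfl
  have hmono : ∀ {w w' : List α}, w <+: w' → (P w').card ≤ (P w).card := by
    intro w w' h
    apply Finset.card_le_card
    intro i hi
    simp only [hP, Finset.mem_filter] at hi ⊢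
    exact ⟨hi.1, h.trans hi.2⟩
  have hleaf : ∀ {w₁ w₂ : List α}, SigmaLeafWord S w₁ → SigmaLeafWord S w₂ →
      w₁ <+: w₂ → w₁ = w₂ := by
    intro w₁ w₂ h1 h2 hpre
    by_contra hne
    obtain ⟨t, rfl⟩ := hpre
    cases t with
    | nil => simp at hne
    | cons a t' =>
      apply h1.2 a
      have hp : (w₁ ++ [a]) <+: (w₁ ++ a :: t') := by
        apply (List.prefix_append_right_inj w₁).mpr
        exact ⟨t', rfl⟩
      have := h2.1
      unfold SigmaWord at this ⊢
      rw [hocc] at this ⊢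
      exact this.trans (hmono hp)
  have hcardpos : 0 < Fintype.card α := Fintype.card_pos
  have hne : ∀ {w : List α}, SigmaLeafWord S w → (P w).Nonempty := by
    intro w hw
    rw [← Finset.card_pos]
    calc 0 < Fintype.card α := hcardpos
    _ ≤ (P w).card := by rw [← hocc]; exact hw.1
  have hcomp : ∀ {w₁ w₂ : List α} {i : ℕ}, i ∈ P w₁ → i ∈ P w₂ →
      w₁ <+: w₂ ∨ w₂ <+: w₁ := by
    intro w₁ w₂ i hi1 hi2
    simp only [hP, Finset.mem_filter] at hi1 hi2
    exact List.prefix_or_prefix_of_prefix hi1.2 hi2.2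
  have heqof : ∀ {w₁ w₂ : List α} {i : ℕ}, SigmaLeafWord S w₁ → SigmaLeafWord S w₂ →
      i ∈ P w₁ → i ∈ P w₂ → w₁ = w₂ := by
    intro w₁ w₂ i h1 h2 hi1 hi2
    rcases hcomp hi1 hi2 with h | h
    · exact hleaf h1 h2 h
    · exact (hleaf h2 h1 h).symm
  have hinj : Set.InjOn P {w | SigmaLeafWord S w} := by
    intro w₁ h1 w₂ h2 heq
    obtain ⟨i, hi⟩ := hne h1
    exact heqof h1 h2 hi (heq ▸ hi)
  have hfin : {w : List α | SigmaLeafWord S w}.Finite := by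
    apply Set.Finite.of_finite_image _ hinj
    apply Set.Finite.subset ((Finset.range S.length).powerset.finite_toSet)
    rintro _ ⟨w, _, rfl⟩
    simp only [Finset.coe_powerset, Set.mem_preimage, Set.mem_powerset_iff,
      Finset.coe_subset, Finset.mem_coe, Finset.mem_powerset]
    exact Finset.filter_subset _ _
  refine ⟨hfin, ?_⟩
  rw [Set.ncard_eq_toFinset_card _ hfin]
  set F := hfin.toFinset with hF
  have hmem : ∀ w ∈ F, SigmaLeafWord S w := by
    intro w hw
    rw [hF, Set.Finite.mem_toFinset] at hw
    exact hw
  have hdisj : ∀ w₁ ∈ F, ∀ w₂ ∈ F, w₁ ≠ w₂ → Disjoint (P w₁) (P w₂) := by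
    intro w₁ h1 w₂ h2 hne'
    rw [Finset.disjoint_left]
    intro i hi1 hi2
    exact hne' (heqof (hmem _ h1) (hmem _ h2) hi1 hi2)
  calc Fintype.card α * F.card = ∑ _w ∈ F, Fintype.card α := by
        rw [Finset.sum_const, smul_eq_mul, mul_comm]
    _ ≤ ∑ w ∈ F, (P w).card := by
        apply Finset.sum_le_sum
        intro w hw
        rw [← hocc]
        exact (hmem w hw).1
    _ = (F.biUnion P).card := (Finset.card_biUnion hdisj).symm
    _ ≤ (Finset.range S.length).card := by
        apply Finset.card_le_card
        intro i hi
        rw [Finset.mem_biUnion] at hi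
        obtain ⟨w, _, hiw⟩ := hi
        exact Finset.mem_of_mem_filter i hiw
    _ = S.length := Finset.card_range _
end

section
/- Let S be a string over a nonempty finite alphabet Σ, and let w and w' be two distinct σ-leaf-words of S. Then w is not a prefix of w' and w' is not a prefix of w; consequently, there is no index i with 0 ≤ i < |S| such that both w and w' are prefixes of the suffix S.drop i (the sets of occurrence positions of distinct σ-leaf-words are pairwise disjoint). -/
theorem stmt_2 {α : Type*} [DecidableEq α] [Fintype α] [Nonempty α] (S : List α)
    (w w' : List α) (hw : SigmaLeafWord S w) (hw' : SigmaLeafWord S w') (hne : w ≠ w') :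
    ¬ w <+: w' ∧ ¬ w' <+: w ∧
    ∀ i < S.length, ¬ (w <+: S.drop i ∧ w' <+: S.drop i) := by
  have occ_mono : ∀ (u v : List α), u <+: v → occ S v ≤ occ S u := by
    intro u v huv
    apply Finset.card_le_card
    intro i hi
    simp only [Finset.mem_filter] at *
    exact ⟨hi.1, huv.trans hi.2⟩
  have key : ∀ u v : List α, SigmaLeafWord S u → SigmaLeafWord S v → u ≠ v →
      ¬ u <+: v := by
    intro u v hu hv huv hpre
    obtain ⟨t, ht⟩ := hpre
    cases' t with a t
    · exact huv (by simpa using ht)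
    · apply hu.2 a
      have : u ++ [a] <+: v := ⟨t, by simpa using ht⟩
      exact le_trans hv.1 (occ_mono _ _ this)
  refine ⟨key w w' hw hw' hne, key w' w hw' hw hne.symm, ?_⟩
  intro i _ ⟨h1, h2⟩
  rcases (List.prefix_or_prefix_of_prefix h1 h2) with h | h
  · exact key w w' hw hw' hne h
  · exact key w' w hw' hw hne.symm h
end

section
/- Let S be a string over a nonempty finite alphabet Σ. If S has at least one σ-word, then the number of branching-σ-words of S is strictly less than the number of σ-leaf-words of S. -/
set_option linter.unusedSectionVars false
section Aux

variable {α : Type*} [DecidableEq α] [Fintype α]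

lemma occ_mono (S w v : List α) (h : w <+: v) : occ S v ≤ occ S w := by
  apply Finset.card_le_card
  intro i hi
  simp only [Finset.mem_filter, Finset.mem_range] at *
  exact ⟨hi.1, h.trans hi.2⟩

lemma sigma_prefix (S w v : List α) (hv : SigmaWord S v) (h : w <+: v) : SigmaWord S w :=
  le_trans hv (occ_mono S w v h)

lemma occ_le (S w : List α) : occ S w ≤ S.length := by
  calc occ S w ≤ (Finset.range S.length).card := Finset.card_filter_le _ _
  _ = S.length := Finset.card_range _

lemma occ_nil (S : List α) : occ S ([] : List α) = S.length := by
  unfold occ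
  simp [List.nil_prefix]

lemma sigma_nil (S : List α) (h : ∃ w : List α, SigmaWord S w) :
    SigmaWord S ([] : List α) := by
  obtain ⟨w, hw⟩ := h
  unfold SigmaWord at *
  rw [occ_nil]
  exact le_trans hw (occ_le S w)

lemma sigma_sublist [Nonempty α] (S w : List α) (h : SigmaWord S w) : w.Sublist S := by
  have h1 : 0 < occ S w := lt_of_lt_of_le Fintype.card_pos h
  obtain ⟨i, hi⟩ := Finset.card_pos.mp h1
  simp only [Finset.mem_filter, Finset.mem_range] at hi
  exact hi.2.sublist.trans (List.drop_sublist i S)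

end Aux

theorem stmt_4 {α : Type*} [DecidableEq α] [Fintype α] [Nonempty α] (S : List α)
    (h : ∃ w : List α, SigmaWord S w) :
    {w : List α | BranchingSigmaWord S w}.ncard <
      {w : List α | SigmaLeafWord S w}.ncard := by
  classical
  set T : Finset (List α) := S.sublists.toFinset.filter (fun w => SigmaWord S w) with hT
  have memT : ∀ w : List α, w ∈ T ↔ SigmaWord S w := by
    intro w
    simp only [hT, Finset.mem_filter, List.mem_toFinset, List.mem_sublists]
    exact ⟨fun h => h.2, fun h => ⟨sigma_sublist S w h, h⟩⟩
  set deg : List α → ℕ :=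
    fun w => (Finset.univ.filter (fun a : α => SigmaWord S (w ++ [a]))).card with hdeg
  have hroot : ([] : List α) ∈ T := (memT _).mpr (sigma_nil S h)
  have hTpos : 1 ≤ T.card := Finset.card_pos.mpr ⟨[], hroot⟩
  -- key sum identity: ∑ deg = |T| - 1
  have key : ∑ w ∈ T, deg w = T.card - 1 := by
    have h1 : (T.erase []).card = T.card - 1 := Finset.card_erase_of_mem hroot
    rw [← h1]
    have hmap : ∀ c ∈ T.erase [], c.dropLast ∈ T := by
      intro c hc
      obtain ⟨hne, hcT⟩ := Finset.mem_erase.mp hc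
      exact (memT _).mpr (sigma_prefix S _ c ((memT _).mp hcT)
        ⟨[c.getLast hne], List.dropLast_append_getLast hne⟩)
    rw [Finset.card_eq_sum_card_fiberwise hmap]
    have fib : ∀ w : List α,
        (Finset.univ.filter (fun a : α => SigmaWord S (w ++ [a]))).card
          = ((T.erase []).filter (fun c => c.dropLast = w)).card := by
      intro w
      apply Finset.card_bij (fun a _ => w ++ [a])
      · intro a ha
        simp only [Finset.mem_filter, Finset.mem_univ, true_and] at ha
        simp only [Finset.mem_filter, Finset.mem_erase]
        exact ⟨⟨by simp, (memT _).mpr ha⟩, by simp⟩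
      · intro a _ b _ hab
        simpa using hab
      · intro c hc
        simp only [Finset.mem_filter, Finset.mem_erase] at hc
        obtain ⟨⟨hcne, hcT⟩, hcd⟩ := hc
        refine ⟨c.getLast hcne, ?_, ?_⟩
        · simp only [Finset.mem_filter, Finset.mem_univ, true_and]
          have hc' : w ++ [c.getLast hcne] = c := by
            rw [← hcd]; exact List.dropLast_append_getLast hcne
          rw [hc']
          exact (memT _).mp hcT
        · rw [← hcd]; exact List.dropLast_append_getLast hcne
    exact Finset.sum_congr rfl fun w _ => by rw [hdeg]; exact fib w
  -- identify the two sets with finsets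
  have hBset : {w : List α | BranchingSigmaWord S w}
      = ↑(T.filter fun w => 2 ≤ deg w) := by
    ext w
    simp only [Set.mem_setOf_eq, Finset.coe_filter, Set.mem_setOf_eq]
    constructor
    · rintro ⟨a, b, hab, ha, hb⟩
      refine ⟨(memT w).mpr (sigma_prefix S w _ ha ⟨[a], rfl⟩), ?_⟩
      rw [hdeg]
      exact Finset.one_lt_card.mpr ⟨a, by simp [ha], b, by simp [hb], hab⟩
    · rintro ⟨hwT, hdeg2⟩
      obtain ⟨a, ha, b, hb, hab⟩ := Finset.one_lt_card.mp hdeg2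
      simp only [Finset.mem_filter, Finset.mem_univ, true_and] at ha hb
      exact ⟨a, b, hab, ha, hb⟩
  have hLset : {w : List α | SigmaLeafWord S w}
      = ↑(T.filter fun w => deg w = 0) := by
    ext w
    simp only [Set.mem_setOf_eq, Finset.coe_filter, Set.mem_setOf_eq, SigmaLeafWord]
    constructor
    · rintro ⟨hw, hext⟩
      refine ⟨(memT w).mpr hw, ?_⟩
      rw [hdeg, Finset.card_eq_zero, Finset.filter_eq_empty_iff]
      exact fun a _ => hext a
    · rintro ⟨hwT, hd0⟩
      refine ⟨(memT w).mp hwT, fun a ha => ?_⟩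
      rw [hdeg, Finset.card_eq_zero, Finset.filter_eq_empty_iff] at hd0
      exact hd0 (Finset.mem_univ a) ha
  rw [hBset, hLset, Set.ncard_coe_finset, Set.ncard_coe_finset]
  -- counting
  have split : (T.filter fun w => deg w = 0).card
      + (T.filter fun w => ¬ deg w = 0).card = T.card :=
    Finset.card_filter_add_card_filter_not _
  have bound : (T.filter fun w => ¬ deg w = 0).card
      + (T.filter fun w => 2 ≤ deg w).card ≤ ∑ w ∈ T, deg w := by
    rw [Finset.card_filter, Finset.card_filter, ← Finset.sum_add_distrib]
    apply Finset.sum_le_sum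
    intro w _
    split_ifs <;> omega
  omega
end

section
/- Let S be a string over a nonempty finite alphabet Σ, let w be a word, and let A ⊆ Σ be a set of characters such that occ_S(w ++ [a]) < |Σ| for every a ∈ A. Then the number of indices i with 0 ≤ i < |S| such that w ++ [a] is a prefix of S.drop i for some a ∈ A is at most |Σ|·(|Σ| − 1); in particular it is less than |Σ|². -/
theorem stmt_6 {α : Type*} [DecidableEq α] [Fintype α] [Nonempty α] (S : List α)
    (w : List α) (A : Finset α)
    (hA : ∀ a ∈ A, occ S (w ++ [a]) < Fintype.card α) :
    ((Finset.range S.length).filter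
        (fun i => ∃ a ∈ A, (w ++ [a]) <+: S.drop i)).card ≤
      Fintype.card α * (Fintype.card α - 1) ∧
    ((Finset.range S.length).filter
        (fun i => ∃ a ∈ A, (w ++ [a]) <+: S.drop i)).card < (Fintype.card α) ^ 2 := by
  have hcard : 1 ≤ Fintype.card α := Fintype.card_pos
  have hsub : (Finset.range S.length).filter
      (fun i => ∃ a ∈ A, (w ++ [a]) <+: S.drop i) ⊆
      A.biUnion (fun a => (Finset.range S.length).filter (fun i => (w ++ [a]) <+: S.drop i)) := by
    intro i hi
    simp only [Finset.mem_filter, Finset.mem_biUnion] at hi ⊢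
    obtain ⟨hi, a, ha, hp⟩ := hi
    exact ⟨a, ha, hi, hp⟩
  have h1 : ((Finset.range S.length).filter
      (fun i => ∃ a ∈ A, (w ++ [a]) <+: S.drop i)).card ≤
      Fintype.card α * (Fintype.card α - 1) := by
    calc _ ≤ (A.biUnion (fun a => (Finset.range S.length).filter
              (fun i => (w ++ [a]) <+: S.drop i))).card := Finset.card_le_card hsub
      _ ≤ ∑ a ∈ A, ((Finset.range S.length).filter
              (fun i => (w ++ [a]) <+: S.drop i)).card := Finset.card_biUnion_le
      _ ≤ ∑ _a ∈ A, (Fintype.card α - 1) := by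
          apply Finset.sum_le_sum
          intro a ha
          have := hA a ha
          unfold occ at this
          omega
      _ = A.card * (Fintype.card α - 1) := by rw [Finset.sum_const, smul_eq_mul]
      _ ≤ Fintype.card α * (Fintype.card α - 1) :=
          Nat.mul_le_mul_right _ (Finset.card_le_univ A)
  refine ⟨h1, lt_of_le_of_lt h1 ?_⟩
  have : Fintype.card α * (Fintype.card α - 1) < Fintype.card α * Fintype.card α :=
    by have h2 := hcard; nlinarith [Nat.sub_add_cancel hcard]
  calc Fintype.card α * (Fintype.card α - 1) < Fintype.card α * Fintype.card α := this
    _ = Fintype.card α ^ 2 := (sq (Fintype.card α)).symm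
end

section
/- Let S be a string over a nonempty finite alphabet Σ, let w be a word with occ_S(w) = |Σ|, and let a_1, …, a_k be k pairwise distinct characters of Σ such that occ_S(w ++ [a_i]) ≥ 1 for each i. Then occ_S(w ++ [a_i]) ≤ |Σ| − k + 1 for every i. -/
lemma sum_occ_le {α : Type*} [DecidableEq α] (S w : List α) (k : ℕ) (a : Fin k → α)
    (hinj : Function.Injective a) :
    ∑ j : Fin k, occ S (w ++ [a j]) ≤ occ S w := by
  classical
  unfold occ
  rw [← Finset.card_biUnion]
  · apply Finset.card_le_card
    intro n hn
    simp only [Finset.mem_biUnion, Finset.mem_filter, Finset.mem_range] at hn ⊢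
    obtain ⟨j, _, hn1, hn2⟩ := hn
    exact ⟨hn1, (List.prefix_append w [a j]).trans hn2⟩
  · intro i _ j _ hij
    apply Finset.disjoint_left.mpr
    intro n hi hj
    simp only [Finset.mem_filter] at hi hj
    have h1 := hi.2
    have h2 := hj.2
    have : w ++ [a i] = w ++ [a j] := by
      have := List.prefix_of_prefix_length_le h1 h2 (by simp)
      exact this.eq_of_length (by simp)
    exact hij (hinj (by simpa using this))

theorem stmt_7 {α : Type*} [DecidableEq α] [Fintype α] [Nonempty α] (S : List α)
    (w : List α) (hw : occ S w = Fintype.card α) (k : ℕ) (a : Fin k → α)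
    (hinj : Function.Injective a)
    (hpos : ∀ i : Fin k, 1 ≤ occ S (w ++ [a i])) :
    ∀ i : Fin k, occ S (w ++ [a i]) ≤ Fintype.card α - k + 1 := by
  intro i
  have hsum := sum_occ_le S w k a hinj
  rw [hw] at hsum
  rw [← Finset.add_sum_erase _ (fun j => occ S (w ++ [a j])) (Finset.mem_univ i)] at hsum
  have h1 := hsum
  have h2 : (k - 1 : ℕ) ≤ ∑ j ∈ Finset.univ.erase i, occ S (w ++ [a j]) := by
    calc (k - 1 : ℕ) = (Finset.univ.erase i).card := by
          simp [Finset.card_erase_of_mem, Finset.card_univ]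
      _ ≤ _ := Finset.card_nsmul_le_sum _ _ 1 (fun j _ => hpos j) |>.trans_eq' (by simp)
  have hk : 1 ≤ k := i.pos
  omega
end

section
/- Let S be a string over a nonempty finite alphabet Σ, let x be a word with occ_S(x) < |Σ|, and let u be a word such that x is a branching-σ-word of the extended string u ++ S. Then |u| ≥ |Σ|. -/
/-! The occurrences of `x ++ [a]` and of `x ++ [b]` are disjoint sets of occurrences of `x`, so a
branching-σ-word of `u ++ S` occurs at least `2 |Σ|` times there. Prepending `u` creates at most
`|u|` new occurrences, namely those starting inside `u`; hence `2 |Σ| ≤ |u| + occ S x < |u| + |Σ|`. -/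

lemma List.eq_of_append_singleton_prefix {α : Type*} {w t : List α} {a b : α}
    (ha : w ++ [a] <+: t) (hb : w ++ [b] <+: t) : a = b := by
  rcases List.prefix_or_prefix_of_prefix ha hb with h | h
  · simpa using h.eq_of_length (by simp)
  · simpa using (h.eq_of_length (by simp)).symm

lemma occ_append_singleton_add_le {α : Type*} [DecidableEq α] (S w : List α) {a b : α}
    (hab : a ≠ b) : occ S (w ++ [a]) + occ S (w ++ [b]) ≤ occ S w := by
  unfold occ
  rw [← Finset.card_union_of_disjoint]
  · refine Finset.card_le_card (Finset.union_subset ?_ ?_) <;>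
      exact Finset.monotone_filter_right _ fun _ _ h => (w.prefix_append _).trans h
  · exact Finset.disjoint_filter.2 fun _ _ ha hb => hab (List.eq_of_append_singleton_prefix ha hb)

lemma occ_append_le {α : Type*} [DecidableEq α] (u S w : List α) :
    occ (u ++ S) w ≤ u.length + occ S w := by
  unfold occ
  rw [List.length_append, Finset.range_add, Finset.filter_union]
  have hshift : ((Finset.range S.length).map (addLeftEmbedding u.length)).filter
      (fun i => w <+: (u ++ S).drop i) =
      ((Finset.range S.length).filter (fun i => w <+: S.drop i)).map
        (addLeftEmbedding u.length) := by
    rw [Finset.filter_map]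
    congr 1
    ext i
    simp [List.drop_append, List.drop_eq_nil_of_le]
  refine (Finset.card_union_le _ _).trans (Nat.add_le_add ?_ (hshift ▸ Finset.card_map _).le)
  exact (Finset.card_filter_le _ _).trans_eq (Finset.card_range _)

theorem stmt_9_general {α : Type*} [DecidableEq α] [Fintype α] (S : List α)
    (x : List α) (hx : occ S x < Fintype.card α) (u : List α)
    (hbr : BranchingSigmaWord (u ++ S) x) :
    Fintype.card α ≤ u.length := by
  obtain ⟨a, b, hab, ha, hb⟩ := hbr
  have hsplit := occ_append_singleton_add_le (u ++ S) x hab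
  have hprepend := occ_append_le u S x
  unfold SigmaWord at ha hb
  omega

theorem stmt_9 {α : Type*} [DecidableEq α] [Fintype α] [Nonempty α] (S : List α)
    (x : List α) (hx : occ S x < Fintype.card α) (u : List α)
    (hbr : BranchingSigmaWord (u ++ S) x) :
    Fintype.card α ≤ u.length :=
  stmt_9_general S x hx u hbr
end
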